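/- arXiv:2507.00618 — 2 statements merged into one kernel-verified Lean document; each statement's English description precedes it below -/
import Mathlib

section
/- Let φ = (1+√5)/2 be the golden ratio and Γ = { (m + n/φ, −m/φ + n) : m, n ∈ ℤ } ⊂ ℝ², i.e. the image of ℤ² under the matrix with rows (1, 1/φ) and (−1/φ, 1). Then Γ is an admissible lattice: inf_{(γ₁,γ₂)∈Γ\{0}} |γ₁γ₂| > 0. -/
open MeasureTheory Set Real

noncomputable section

abbrev Pt : Type := ℝ × ℝ

/-- The full-rank lattice `M ℤ² ⊂ ℝ²` generated by an invertible matrix `M`. -/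
def latticeOf (M : Matrix (Fin 2) (Fin 2) ℝ) : Set Pt :=
  {p : Pt | ∃ m n : ℤ, p = (M 0 0 * m + M 0 1 * n, M 1 0 * m + M 1 1 * n)}

/-- A lattice `Γ ⊂ ℝ²` is admissible if `inf_{γ ∈ Γ \ {0}} |γ₁γ₂| > 0`. -/
def IsAdmissible (Γ : Set Pt) : Prop :=
  ∃ c > 0, ∀ γ ∈ Γ, γ ≠ (0 : Pt) → c ≤ |γ.1 * γ.2|

lemma golden_form_ne_zero (m n : ℤ) (h : ¬(m = 0 ∧ n = 0)) :
    n ^ 2 + m * n - m ^ 2 ≠ 0 := by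
  intro hk
  have key : (2 * n + m) ^ 2 = 5 * m ^ 2 := by ring_nf; linarith [hk]
  have h5 : Irrational (Real.sqrt 5) := by
    have := Nat.Prime.irrational_sqrt (p := 5) (by norm_num)
    simpa using this
  have hm : m ≠ 0 := by
    intro hm0
    apply h
    refine ⟨hm0, ?_⟩
    subst hm0
    simpa using key
  have hr : Real.sqrt 5 = |((2 * n + m : ℤ) : ℝ) / ((m : ℤ) : ℝ)| := by
    have hmr : ((m : ℤ) : ℝ) ≠ 0 := Int.cast_ne_zero.mpr hm
    have hsq : (((2 * n + m : ℤ) : ℝ) / ((m : ℤ) : ℝ)) ^ 2 = 5 := by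
      field_simp
      exact_mod_cast key.trans (mul_comm _ _)
    rw [← hsq, Real.sqrt_sq_eq_abs]
  apply h5
  exact ⟨|(2 * n + m : ℚ) / (m : ℚ)|, by rw [hr]; push_cast; ring⟩

/-- The lattice generated by the golden-ratio matrix `[[1, 1/φ], [−1/φ, 1]]`
is admissible. -/
theorem goldenRatio_lattice_admissible (φ : ℝ) (hφ : φ = (1 + Real.sqrt 5) / 2)
    (Γ : Set Pt)
    (hΓ : Γ = {p : Pt | ∃ m n : ℤ, p = ((m : ℝ) + (n : ℝ) / φ,
      -((m : ℝ) / φ) + (n : ℝ))}) :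
    IsAdmissible Γ := by
  have h5 : Real.sqrt 5 ^ 2 = 5 := Real.sq_sqrt (by norm_num)
  have hs5 : (0:ℝ) ≤ Real.sqrt 5 := Real.sqrt_nonneg 5
  have hφpos : 0 < φ := by rw [hφ]; positivity
  have hφne : φ ≠ 0 := ne_of_gt hφpos
  have hφ2 : φ ^ 2 = φ + 1 := by rw [hφ]; nlinarith [h5]
  refine ⟨1 / φ, by positivity, ?_⟩
  rintro γ hγ hne
  rw [hΓ] at hγ
  obtain ⟨m, n, hp⟩ := hγ
  have hmn : ¬(m = 0 ∧ n = 0) := by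
    rintro ⟨hm, hnn⟩
    apply hne
    rw [hp, hm, hnn]
    simp [Prod.ext_iff]
  have hk := golden_form_ne_zero m n hmn
  have hprod : γ.1 * γ.2 = ((n ^ 2 + m * n - m ^ 2 : ℤ) : ℝ) / φ := by
    rw [hp]
    push_cast
    field_simp
    ring_nf
    linear_combination (↑m * ↑n : ℝ) * hφ2
  rw [hprod, abs_div, abs_of_pos hφpos]
  have h1 : (1 : ℝ) ≤ |((n ^ 2 + m * n - m ^ 2 : ℤ) : ℝ)| := by
    rw [← Int.cast_abs]
    exact_mod_cast Int.one_le_abs hk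
  gcongr
end
end

section
/- Let r, s, u, v ∈ ℝ\{0} be such that the matrix with rows (r,s) and (u,v) is invertible, and let Γ = { (rm + sn, um + vn) : m, n ∈ ℤ } ⊂ ℝ². Then Γ is admissible (i.e. inf_{(γ₁,γ₂)∈Γ\{0}} |γ₁γ₂| > 0) if and only if r/s and u/v are distinct irrational badly-approximable numbers. -/
open MeasureTheory Set Real

noncomputable section

/-- A real number `x` is badly approximable if `|x − p/q| > c/q²` for some `c > 0`
and all rationals `p/q`, `q ≥ 1`. -/
def BadlyApproximable (x : ℝ) : Prop :=
  ∃ c > 0, ∀ p : ℤ, ∀ q : ℕ, 1 ≤ q → c / (q : ℝ) ^ 2 < |x - (p : ℝ) / (q : ℝ)|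

lemma abs_linear (m n : ℤ) (hm : m ≠ 0) :
    ∃ p : ℤ, ∀ y : ℝ, |y * m + n| = (m.natAbs : ℝ) * |y - p / m.natAbs| := by
  have hq0 : ((m.natAbs : ℝ)) ≠ 0 := by
    simp [Int.natAbs_eq_zero, hm]
  have hqpos : (0:ℝ) ≤ (m.natAbs : ℝ) := by positivity
  have key : ∀ (p : ℤ) (y : ℝ), (m.natAbs : ℝ) * |y - p / m.natAbs| =
      |(m.natAbs : ℝ) * y - p| := by
    intro p y
    rw [← abs_of_nonneg hqpos, ← abs_mul]
    congr 1
    field_simp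
    rw [abs_of_nonneg hqpos]
  rcases Int.natAbs_eq m with h | h
  · refine ⟨-n, fun y => ?_⟩
    have hc : ((m:ℝ)) = (m.natAbs : ℝ) := by
      conv_lhs => rw [h]
      push_cast [Nat.cast_natAbs, Int.cast_abs]
      ring
    rw [key]
    congr 1
    rw [hc]; push_cast; ring
  · refine ⟨n, fun y => ?_⟩
    have hc : ((m:ℝ)) = -(m.natAbs : ℝ) := by
      conv_lhs => rw [h]
      push_cast [Nat.cast_natAbs, Int.cast_abs]
      ring
    rw [key, ← abs_neg (y * (m:ℝ) + n)]
    congr 1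
    rw [hc]; push_cast; ring

lemma irr_aux (α β : ℝ) (hαβ : α ≠ β) {c : ℝ} (hc : 0 < c)
    (H : ∀ m n : ℤ, (α * m + n ≠ 0 ∨ β * m + n ≠ 0) →
      c ≤ |(α * m + n) * (β * m + n)|) : Irrational α := by
  rw [Irrational]
  rintro ⟨x, hx⟩
  have hden : ((x.den : ℝ)) ≠ 0 := by
    exact_mod_cast x.den_nz
  have h1 : α * ((x.den : ℤ) : ℝ) + ((-x.num : ℤ) : ℝ) = 0 := by
    push_cast
    rw [← hx, Rat.cast_def]
    field_simp
    ring
  have h2 : β * ((x.den : ℤ) : ℝ) + ((-x.num : ℤ) : ℝ) ≠ 0 := by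
    intro h
    apply hαβ
    have h3 : (α - β) * (x.den : ℝ) = 0 := by push_cast at h1 h ⊢; linarith
    rcases mul_eq_zero.mp h3 with h4 | h4
    · exact sub_eq_zero.mp h4
    · exact absurd h4 hden
  have := H (x.den : ℤ) (-x.num : ℤ) (Or.inr h2)
  rw [h1] at this
  simp at this
  linarith

lemma ba_aux (α β : ℝ) (hαβ : α ≠ β) {c : ℝ} (hc : 0 < c)
    (H : ∀ m n : ℤ, (α * m + n ≠ 0 ∨ β * m + n ≠ 0) →
      c ≤ |(α * m + n) * (β * m + n)|) : BadlyApproximable α := by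
  have hirr : Irrational α := irr_aux α β hαβ hc H
  set K : ℝ := |β - α| + 1 with hK
  have hKpos : 0 < K := by positivity
  have hK1 : 1 ≤ K := by
    have : 0 ≤ |β - α| := abs_nonneg _
    linarith
  refine ⟨min 1 (c / K) / 2, by positivity, fun p q hq => ?_⟩
  have hq0 : (0:ℝ) < (q : ℝ) := by exact_mod_cast hq
  have hq1' : (1:ℝ) ≤ (q : ℝ) := by exact_mod_cast hq
  have hq2 : (0:ℝ) < (q:ℝ)^2 := by positivity
  set d : ℝ := |α - (p:ℝ)/(q:ℝ)| with hd
  have hdpos : 0 < d := by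
    rw [hd, abs_pos, sub_ne_zero]
    intro h
    apply hirr
    exact ⟨(p : ℚ)/(q : ℚ), by push_cast; rw [← h]⟩
  rcases lt_or_ge d 1 with hcase | hcase
  · -- d < 1 : use the lattice bound
    have hne : α * ((q:ℤ):ℝ) + ((-p : ℤ):ℝ) ≠ 0 := by
      push_cast
      intro h
      have : α - (p:ℝ)/(q:ℝ) = 0 := by field_simp at h ⊢; linarith
      rw [hd, this] at hdpos; simp at hdpos
    have hb := H (q : ℤ) (-p : ℤ) (Or.inl hne)
    have e1 : |α * ((q:ℤ):ℝ) + ((-p:ℤ):ℝ)| = (q:ℝ) * d := by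
      rw [hd, ← abs_of_nonneg hq0.le, ← abs_mul]
      congr 1
      push_cast
      field_simp
      rw [abs_of_nonneg hq0.le]; ring
    have e2 : |β * ((q:ℤ):ℝ) + ((-p:ℤ):ℝ)| ≤ (q:ℝ) * K := by
      have heq : β * ((q:ℤ):ℝ) + ((-p:ℤ):ℝ) = (q:ℝ) * (β - α) + (q:ℝ) * (α - (p:ℝ)/(q:ℝ)) := by
        push_cast; field_simp; ring
      rw [heq]
      calc |(q:ℝ) * (β - α) + (q:ℝ) * (α - (p:ℝ)/(q:ℝ))|
          ≤ |(q:ℝ) * (β - α)| + |(q:ℝ) * (α - (p:ℝ)/(q:ℝ))| := abs_add_le _ _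
        _ = (q:ℝ) * |β - α| + (q:ℝ) * d := by rw [abs_mul, abs_mul, abs_of_nonneg hq0.le, hd]
        _ ≤ (q:ℝ) * |β - α| + (q:ℝ) * 1 := by nlinarith
        _ = (q:ℝ) * K := by rw [hK]; ring
    rw [abs_mul, e1] at hb
    have hb2 : c ≤ (q:ℝ) * d * ((q:ℝ) * K) := by
      calc c ≤ (q:ℝ) * d * |β * ((q:ℤ):ℝ) + ((-p:ℤ):ℝ)| := hb
        _ ≤ (q:ℝ) * d * ((q:ℝ) * K) := by
            apply mul_le_mul_of_nonneg_left e2 (by positivity)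
    have hd2 : c / K / (q:ℝ)^2 ≤ d := by
      rw [div_le_iff₀ (by positivity), div_le_iff₀ hKpos]
      nlinarith
    have key2 : min 1 (c / K) / 2 < c / K := by
      have h5 : 0 < c / K := by positivity
      have h6 : min 1 (c / K) ≤ c / K := min_le_right _ _
      linarith
    calc min 1 (c / K) / 2 / (q:ℝ)^2 < (c / K) / (q:ℝ)^2 := by
          rw [div_lt_div_iff₀ hq2 hq2]
          nlinarith [mul_pos (sub_pos.mpr key2) hq2]
      _ ≤ d := hd2
  · -- 1 ≤ d
    have hq12 : (1:ℝ) ≤ (q:ℝ)^2 := by nlinarith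
    calc min 1 (c / K) / 2 / (q:ℝ)^2 ≤ 1 / 2 / (q:ℝ)^2 := by
          rw [div_le_div_iff₀ hq2 hq2]
          have : min 1 (c / K) ≤ 1 := min_le_left _ _
          nlinarith
      _ ≤ 1 / 2 := by
          rw [div_le_iff₀ hq2]
          nlinarith
      _ < 1 := by norm_num
      _ ≤ d := hcase

lemma key_iff (α β : ℝ) (hαβ : α ≠ β) :
    (∃ c > 0, ∀ m n : ℤ, (α * m + n ≠ 0 ∨ β * m + n ≠ 0) →
        c ≤ |(α * m + n) * (β * m + n)|) ↔
      Irrational α ∧ Irrational β ∧ BadlyApproximable α ∧ BadlyApproximable β := by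
  constructor
  · rintro ⟨c, hc, H⟩
    have H' : ∀ m n : ℤ, (β * m + n ≠ 0 ∨ α * m + n ≠ 0) →
        c ≤ |(β * m + n) * (α * m + n)| := by
      intro m n h
      rw [mul_comm]
      exact H m n h.symm
    exact ⟨irr_aux α β hαβ hc H, irr_aux β α (Ne.symm hαβ) hc H',
      ba_aux α β hαβ hc H, ba_aux β α (Ne.symm hαβ) hc H'⟩
  · rintro ⟨hiα, hiβ, ⟨ca, hca, hba⟩, ⟨cb, hcb, hbb⟩⟩
    have hab : 0 < |α - β| := by
      rw [abs_pos, sub_ne_zero]; exact hαβ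
    refine ⟨min 1 (|α - β| * min ca cb / 2), by positivity, fun m n hmn => ?_⟩
    rcases eq_or_ne m 0 with rfl | hm
    · have hn : ((n:ℝ)) ≠ 0 := by
        rcases hmn with h | h <;> · intro h0; apply h; simp [h0]
      have hn1 : (1:ℝ) ≤ |(n:ℝ)| := by
        have : n ≠ 0 := by exact_mod_cast hn
        have := Int.one_le_abs this
        calc (1:ℝ) ≤ ((|n| : ℤ) : ℝ) := by exact_mod_cast this
          _ = |(n:ℝ)| := by push_cast; ring
      have : (1:ℝ) ≤ |(α * (0:ℤ) + n) * (β * (0:ℤ) + n)| := by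
        push_cast
        simp only [mul_zero, zero_add]
        rw [abs_mul]
        nlinarith
      calc min 1 (|α - β| * min ca cb / 2) ≤ 1 := min_le_left _ _
        _ ≤ _ := this
    · obtain ⟨p, hp⟩ := abs_linear m n hm
      set q : ℕ := m.natAbs with hqdef
      have hq1 : 1 ≤ q := Nat.one_le_iff_ne_zero.mpr (Int.natAbs_ne_zero.mpr hm)
      have hq0 : (0:ℝ) < (q:ℝ) := by exact_mod_cast hq1
      have h1 : ca / q < |α * m + n| := by
        have := hba p q hq1
        rw [hp α]
        calc ca / (q:ℝ) = (q:ℝ) * (ca / (q:ℝ)^2) := by field_simp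
          _ < (q:ℝ) * |α - (p:ℝ)/(q:ℝ)| := by
              apply mul_lt_mul_of_pos_left this hq0
      have h2 : cb / q < |β * m + n| := by
        have := hbb p q hq1
        rw [hp β]
        calc cb / (q:ℝ) = (q:ℝ) * (cb / (q:ℝ)^2) := by field_simp
          _ < (q:ℝ) * |β - (p:ℝ)/(q:ℝ)| := by
              apply mul_lt_mul_of_pos_left this hq0
      have h3 : (q:ℝ) * |α - β| ≤ |α * m + n| + |β * m + n| := by
        have heq : (α * m + n) - (β * m + n) = (α - β) * m := by ring
        calc (q:ℝ) * |α - β| = |α - β| * |(m:ℝ)| := by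
              rw [hqdef, Nat.cast_natAbs]; push_cast [Int.cast_abs]; ring
          _ = |(α - β) * m| := (abs_mul _ _).symm
          _ = |(α * m + n) - (β * m + n)| := by rw [heq]
          _ ≤ |α * m + n| + |β * m + n| := abs_sub _ _
      rw [abs_mul]
      have hcmin : 0 < min ca cb := lt_min hca hcb
      rcases le_total |α * (m:ℝ) + n| |β * (m:ℝ) + n| with hle | hle
      · have hbig : (q:ℝ) * |α - β| / 2 ≤ |β * m + n| := by linarith
        calc min 1 (|α - β| * min ca cb / 2) ≤ |α - β| * min ca cb / 2 := min_le_right _ _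
          _ ≤ |α - β| * ca / 2 := by
              have : min ca cb ≤ ca := min_le_left _ _
              nlinarith
          _ = (ca / q) * ((q:ℝ) * |α - β| / 2) := by field_simp
          _ ≤ |α * m + n| * |β * m + n| := by
              apply mul_le_mul h1.le hbig (by positivity) (abs_nonneg _)
      · have hbig : (q:ℝ) * |α - β| / 2 ≤ |α * m + n| := by linarith
        calc min 1 (|α - β| * min ca cb / 2) ≤ |α - β| * min ca cb / 2 := min_le_right _ _
          _ ≤ |α - β| * cb / 2 := by
              have : min ca cb ≤ cb := min_le_right _ _
              nlinarith
          _ = ((q:ℝ) * |α - β| / 2) * (cb / q) := by field_simp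
          _ ≤ |α * m + n| * |β * m + n| := by
              apply mul_le_mul hbig h2.le (by positivity) (abs_nonneg _)

/-- A lattice generated by rows `(r,s)` and `(u,v)` is admissible iff `r/s` and `u/v`
are distinct irrational badly-approximable numbers. -/
theorem admissible_iff_badlyApproximable (r s u v : ℝ)
    (hr : r ≠ 0) (hs : s ≠ 0) (hu : u ≠ 0) (hv : v ≠ 0)
    (hdet : r * v - s * u ≠ 0) (Γ : Set Pt)
    (hΓ : Γ = {p : Pt | ∃ m n : ℤ, p = (r * m + s * n, u * m + v * n)}) :
    IsAdmissible Γ ↔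
      r / s ≠ u / v ∧ Irrational (r / s) ∧ Irrational (u / v) ∧
        BadlyApproximable (r / s) ∧ BadlyApproximable (u / v) := by
  set α := r / s with hα
  set β := u / v with hβ
  have hαβ : α ≠ β := by
    intro h
    apply hdet
    have h2 := (div_eq_div_iff hs hv).mp h
    rw [sub_eq_zero, h2]
    ring
  have hfac1 : ∀ m n : ℤ, r * m + s * n = s * (α * m + n) := by
    intro m n
    rw [hα]
    field_simp
  have hfac2 : ∀ m n : ℤ, u * m + v * n = v * (β * m + n) := by
    intro m n
    rw [hβ]
    field_simp
  have hsv : (0:ℝ) < |s * v| := abs_pos.mpr (mul_ne_zero hs hv)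
  constructor
  · rintro ⟨c, hc, H⟩
    refine ⟨hαβ, (key_iff α β hαβ).mp ⟨c / |s * v|, by positivity, ?_⟩⟩
    intro m n hmn
    have hmem : ((r * m + s * n, u * m + v * n) : Pt) ∈ Γ := by
      rw [hΓ]; exact ⟨m, n, rfl⟩
    have hne : ((r * m + s * n, u * m + v * n) : Pt) ≠ 0 := by
      intro h0
      have h01 : r * m + s * n = 0 := congrArg Prod.fst h0
      have h02 : u * m + v * n = 0 := congrArg Prod.snd h0
      rw [hfac1] at h01
      rw [hfac2] at h02
      rcases hmn with h | h
      · rcases mul_eq_zero.mp h01 with h' | h'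
        · exact hs h'
        · exact h h'
      · rcases mul_eq_zero.mp h02 with h' | h'
        · exact hv h'
        · exact h h'
    have hH := H _ hmem hne
    simp only at hH
    rw [hfac1, hfac2] at hH
    have e : (s * (α * m + n)) * (v * (β * m + n))
        = (s * v) * ((α * m + n) * (β * m + n)) := by ring
    rw [e, abs_mul] at hH
    rw [div_le_iff₀ hsv]
    linarith [hH, mul_comm |(α * (m:ℝ) + n) * (β * m + n)| |s * v|]
  · rintro ⟨-, h1, h2, h3, h4⟩
    obtain ⟨c, hc, H⟩ := (key_iff α β hαβ).mpr ⟨h1, h2, h3, h4⟩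
    refine ⟨|s * v| * c, by positivity, ?_⟩
    rintro γ hγ hγ0
    rw [hΓ] at hγ
    obtain ⟨m, n, rfl⟩ := hγ
    have hmn : α * m + n ≠ 0 ∨ β * m + n ≠ 0 := by
      by_contra hcon
      push_neg at hcon
      apply hγ0
      have e1 : r * m + s * n = 0 := by rw [hfac1, hcon.1, mul_zero]
      have e2 : u * m + v * n = 0 := by rw [hfac2, hcon.2, mul_zero]
      simp [Prod.ext_iff, e1, e2]
    have hH := H m n hmn
    simp only
    rw [hfac1, hfac2]
    have e : (s * (α * m + n)) * (v * (β * m + n))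
        = (s * v) * ((α * m + n) * (β * m + n)) := by ring
    rw [e]
    calc |s * v| * c ≤ |s * v| * |(α * m + n) * (β * m + n)| :=
          mul_le_mul_of_nonneg_left hH (abs_nonneg _)
      _ = |s * v * ((α * m + n) * (β * m + n))| := (abs_mul _ _).symm
end
end
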